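/- (Backward greedy is strongly swap-stable) Let 𝒯 be the allocation produced by backward greedy (taxi 1 gets the q_1 furthest agents, taxi 2 the next q_2, etc., with q_1 ≥ … ≥ q_k). If a ∈ T_i, b ∈ T_j with i < j and φ(T_j − b + a, x_a) ≤ φ(T_i, x_a), then swapping a and b changes neither agent's cost: φ(T_j − b + a, x_a) = φ(T_i, x_a) and φ(T_i − a + b, x_b) = φ(T_j, x_b). In particular 𝒯 is strongly swap-stable. -/

import Mathlib

open Finset MeasureTheory ENNReal

/-- Number of agents in coalition `T` whose destination is at least `r`. -/
noncomputable def nT (xd : ℕ → ℝ) (T : Finset ℕ) (r : ℝ) : ℕ := (T.filter fun a => r ≤ xd a).card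

/-- Shapley cost share of a passenger dropping at `y` in coalition `T`
(`∞` when `n_T` vanishes on part of `(0,y]`). -/
noncomputable def phi (xd : ℕ → ℝ) (T : Finset ℕ) (y : ℝ) : ℝ≥0∞ :=
  ∫⁻ r in Set.Ioc (0:ℝ) y, (nT xd T r : ℝ≥0∞)⁻¹

/-- Cost share including the capacity constraint of the taxi. -/
noncomputable def taxiCost (xd : ℕ → ℝ) (q : ℕ) (T : Finset ℕ) (y : ℝ) : ℝ≥0∞ :=
  if T.card ≤ q then phi xd T y else ⊤

/-- Total capacity of taxis `1, …, i`. -/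
def cumQ (q : ℕ → ℕ) (i : ℕ) : ℕ := ∑ j ∈ Finset.Icc 1 i, q j

/-- The backward greedy allocation for agents `1, …, n` sorted nondecreasingly:
taxi `1` gets the `q 1` furthest agents, taxi `2` the next `q 2` furthest, etc. -/
def greedyT (n : ℕ) (q : ℕ → ℕ) (i : ℕ) : Finset ℕ :=
  Finset.Icc (max 1 (n + 1 - cumQ q i)) (n - cumQ q (i - 1))

/-!
In the backward greedy allocation every member of `T_i` lies beyond every member of `T_j`
(`i < j`), and `|T_j| ≤ |T_i|`. Hence, at every distance `r ≤ x_a`, the coalition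
`T_j − b + a` has at most as many riders left as `T_i`: if some member of `T_j − b` is still
aboard then all of `T_i` is, and `|T_j − b + a| ≤ |T_i|`; otherwise only `a` is. So
`φ(T_i, x_a) ≤ φ(T_j − b + a, x_a)` always holds, and equality forces the two integrands to
agree almost everywhere on `(0, x_a]`. On `(0, x_b]` both `a, b` and all of `T_i` are aboard, so
there `T_i − a + b` counts like `T_i` and `T_j − b + a` like `T_j`, and the almost-everywhere
equality turns into `φ(T_i − a + b, x_b) = φ(T_j, x_b)`. Strict envy in either direction
contradicts one of the two equalities.
-/

section RiderCounts

variable (x : ℕ → ℝ)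

lemma nT_antitone (T : Finset ℕ) : Antitone (nT x T) := fun _ _ h =>
  card_le_card (monotone_filter_right T fun _ _ hc => h.trans hc)

lemma measurable_inv_nT (T : Finset ℕ) : Measurable fun r => (nT x T r : ℝ≥0∞)⁻¹ :=
  Monotone.measurable fun _ _ h => ENNReal.inv_le_inv.2 (by exact_mod_cast nT_antitone x T h)

lemma one_le_nT {T : Finset ℕ} {a : ℕ} {r : ℝ} (ha : a ∈ T) (hr : r ≤ x a) :
    1 ≤ nT x T r :=
  card_pos.2 ⟨a, mem_filter.2 ⟨ha, hr⟩⟩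

lemma nT_eq_card {T : Finset ℕ} {r : ℝ} (h : ∀ c ∈ T, r ≤ x c) : nT x T r = #T :=
  congrArg card (filter_true_of_mem h)

lemma nT_union_singleton {S : Finset ℕ} {a : ℕ} {r : ℝ} (ha : a ∉ S) (hr : r ≤ x a) :
    nT x (S ∪ {a}) r = nT x S r + 1 := by
  rw [nT, union_singleton, filter_insert, if_pos hr,
    card_insert_of_notMem fun h => ha (mem_of_mem_filter a h)]
  rfl

lemma nT_erase_union_singleton {B : Finset ℕ} {a b : ℕ} {r : ℝ} (hb : b ∈ B) (ha : a ∉ B)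
    (hra : r ≤ x a) (hrb : r ≤ x b) : nT x (B.erase b ∪ {a}) r = nT x B r := by
  rw [nT_union_singleton x (fun h => ha (mem_of_mem_erase h)) hra, nT, filter_erase]
  exact card_erase_add_one (mem_filter.2 ⟨hb, hrb⟩)

variable {A B : Finset ℕ} {a b : ℕ}

lemma nT_erase_union_singleton_le (haA : a ∈ A) (hbB : b ∈ B) (haB : a ∉ B)
    (hcard : #B ≤ #A) (hBA : ∀ u ∈ A, ∀ v ∈ B, x v ≤ x u) {r : ℝ} (hr : r ≤ x a) :
    nT x (B.erase b ∪ {a}) r ≤ nT x A r := by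
  rw [nT_union_singleton x (fun h => haB (mem_of_mem_erase h)) hr]
  by_cases hboard : ∃ c ∈ B.erase b, r ≤ x c
  · obtain ⟨c, hc, hrc⟩ := hboard
    have hA : nT x A r = #A :=
      nT_eq_card x fun u hu => hrc.trans (hBA u hu c (mem_of_mem_erase hc))
    have hB : nT x (B.erase b) r ≤ #B - 1 := (card_erase_of_mem hbB).symm ▸ card_filter_le _ _
    have hB_pos : 1 ≤ #B := card_pos.2 ⟨b, hbB⟩
    omega
  · simp only [not_exists, not_and, not_le] at hboard
    have hB : nT x (B.erase b) r = 0 := card_eq_zero.2 (filter_eq_empty_iff.2 fun c hc =>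
      (hboard c hc).not_ge)
    simpa [hB] using one_le_nT x haA hr

end RiderCounts

section CostShares

variable (x : ℕ → ℝ) {S T : Finset ℕ} {y : ℝ}

lemma phi_congr (h : ∀ r ∈ Set.Ioc 0 y, nT x S r = nT x T r) : phi x S y = phi x T y :=
  setLIntegral_congr_fun measurableSet_Ioc fun r hr => by rw [h r hr]

lemma phi_le_phi_of_nT_le (h : ∀ r ∈ Set.Ioc 0 y, nT x S r ≤ nT x T r) :
    phi x T y ≤ phi x S y :=
  setLIntegral_mono (measurable_inv_nT x S) fun r hr =>
    ENNReal.inv_le_inv.2 (by exact_mod_cast h r hr)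

lemma phi_ne_top {a : ℕ} (ha : a ∈ T) (hy : y ≤ x a) : phi x T y ≠ ⊤ := by
  have hbound : phi x T y ≤ volume (Set.Ioc 0 y) :=
    calc phi x T y ≤ ∫⁻ _ in Set.Ioc 0 y, 1 :=
          setLIntegral_mono measurable_const fun r hr =>
            ENNReal.inv_le_one.2 (by exact_mod_cast one_le_nT x ha (hr.2.trans hy))
      _ = volume (Set.Ioc 0 y) := setLIntegral_one _
  exact ne_top_of_le_ne_top measure_Ioc_lt_top.ne hbound

lemma phi_eq_of_phi_eq_of_nT_le (hle : ∀ r ∈ Set.Ioc 0 y, nT x S r ≤ nT x T r)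
    (hfin : phi x T y ≠ ⊤) (heq : phi x S y = phi x T y) {y' : ℝ} (hy' : y' ≤ y) :
    phi x S y' = phi x T y' := by
  have hae : (fun r => (nT x T r : ℝ≥0∞)⁻¹) =ᵐ[volume.restrict (Set.Ioc 0 y)]
      fun r => (nT x S r : ℝ≥0∞)⁻¹ :=
    ae_eq_of_ae_le_of_lintegral_le
      ((ae_restrict_iff' measurableSet_Ioc).2 (ae_of_all _ fun r hr =>
        ENNReal.inv_le_inv.2 (by exact_mod_cast hle r hr)))
      hfin (measurable_inv_nT x S).aemeasurable heq.le
  exact (lintegral_congr_ae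
    (ae_restrict_of_ae_restrict_of_subset (Set.Ioc_subset_Ioc_right hy') hae)).symm

variable {A B : Finset ℕ} {a b : ℕ}

lemma phi_le_phi_erase_union_singleton (haA : a ∈ A) (hbB : b ∈ B) (haB : a ∉ B)
    (hcard : #B ≤ #A) (hBA : ∀ u ∈ A, ∀ v ∈ B, x v ≤ x u) :
    phi x A (x a) ≤ phi x (B.erase b ∪ {a}) (x a) :=
  phi_le_phi_of_nT_le x fun _ hr => nT_erase_union_singleton_le x haA hbB haB hcard hBA hr.2

theorem phi_swap_eq_of_le (haA : a ∈ A) (hbB : b ∈ B) (haB : a ∉ B) (hbA : b ∉ A)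
    (hcard : #B ≤ #A) (hBA : ∀ u ∈ A, ∀ v ∈ B, x v ≤ x u)
    (henvy : phi x (B.erase b ∪ {a}) (x a) ≤ phi x A (x a)) :
    phi x (B.erase b ∪ {a}) (x a) = phi x A (x a) ∧
      phi x (A.erase a ∪ {b}) (x b) = phi x B (x b) := by
  have hba : x b ≤ x a := hBA a haA b hbB
  have heq := henvy.antisymm (phi_le_phi_erase_union_singleton x haA hbB haB hcard hBA)
  refine ⟨heq, ?_⟩
  calc phi x (A.erase a ∪ {b}) (x b)
      = phi x A (x b) := phi_congr x fun r hr =>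
        nT_erase_union_singleton x haA hbA hr.2 (hr.2.trans hba)
    _ = phi x (B.erase b ∪ {a}) (x b) := (phi_eq_of_phi_eq_of_nT_le x
        (fun _ hr => nT_erase_union_singleton_le x haA hbB haB hcard hBA hr.2)
        (phi_ne_top x haA le_rfl) heq hba).symm
    _ = phi x B (x b) := phi_congr x fun r hr =>
        nT_erase_union_singleton x hbB haB (hr.2.trans hba) hr.2

end CostShares

section BackwardGreedy

variable {n : ℕ} {q : ℕ → ℕ} {i j a t : ℕ}

lemma cumQ_mono (q : ℕ → ℕ) : Monotone (cumQ q) := fun _ _ h =>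
  sum_le_sum_of_subset (Icc_subset_Icc_right h)

lemma cumQ_eq_cumQ_pred_add (q : ℕ → ℕ) (hi : 1 ≤ i) : cumQ q i = cumQ q (i - 1) + q i := by
  obtain ⟨m, rfl⟩ : ∃ m, i = m + 1 := ⟨i - 1, by omega⟩
  simp [cumQ, sum_Icc_succ_top]

lemma mem_greedyT :
    a ∈ greedyT n q i ↔ 1 ≤ a ∧ n + 1 - cumQ q i ≤ a ∧ a ≤ n - cumQ q (i - 1) := by
  rw [greedyT, mem_Icc]
  omega

lemma greedyT_subset_Icc : greedyT n q i ⊆ Icc 1 n := fun a ha => by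
  rw [mem_greedyT] at ha
  rw [mem_Icc]
  omega

lemma lt_of_mem_greedyT (hij : i < j) (ha : a ∈ greedyT n q i) (ht : t ∈ greedyT n q j) :
    t < a := by
  rw [mem_greedyT] at ha ht
  have := cumQ_mono q (show i ≤ j - 1 by omega)
  omega

lemma card_greedyT_le (hi : 1 ≤ i) (hij : i ≤ j) (hq : q j ≤ q i) :
    #(greedyT n q j) ≤ #(greedyT n q i) := by
  have := cumQ_mono q (show i - 1 ≤ j - 1 by omega)
  have := cumQ_eq_cumQ_pred_add q hi
  have := cumQ_eq_cumQ_pred_add q (hi.trans hij)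
  simp only [greedyT, Nat.card_Icc]
  omega

end BackwardGreedy

theorem stmt14_general (n k : ℕ) (x : ℕ → ℝ)
    (hmono : ∀ a b, 1 ≤ a → a ≤ b → b ≤ n → x a ≤ x b)
    (q : ℕ → ℕ) (hq : ∀ i j, 1 ≤ i → i ≤ j → j ≤ k → q j ≤ q i) :
    (∀ i j, 1 ≤ i → i < j → j ≤ k →
      ∀ a ∈ greedyT n q i, ∀ b ∈ greedyT n q j,
        phi x ((greedyT n q j).erase b ∪ {a}) (x a)
            ≤ phi x (greedyT n q i) (x a) →
          phi x ((greedyT n q j).erase b ∪ {a}) (x a)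
              = phi x (greedyT n q i) (x a) ∧
          phi x ((greedyT n q i).erase a ∪ {b}) (x b)
              = phi x (greedyT n q j) (x b)) ∧
    ¬ ∃ i j a b, 1 ≤ i ∧ i ≤ k ∧ 1 ≤ j ∧ j ≤ k ∧ i ≠ j ∧
        a ∈ greedyT n q i ∧ b ∈ greedyT n q j ∧
        phi x ((greedyT n q j).erase b ∪ {a}) (x a)
            < phi x (greedyT n q i) (x a) ∧
        phi x ((greedyT n q i).erase a ∪ {b}) (x b)
            ≤ phi x (greedyT n q j) (x b) := by
  have weak : ∀ i j, 1 ≤ i → i < j → j ≤ k →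
      ∀ a ∈ greedyT n q i, ∀ b ∈ greedyT n q j,
        phi x ((greedyT n q j).erase b ∪ {a}) (x a) ≤ phi x (greedyT n q i) (x a) →
        phi x ((greedyT n q j).erase b ∪ {a}) (x a) = phi x (greedyT n q i) (x a) ∧
        phi x ((greedyT n q i).erase a ∪ {b}) (x b) = phi x (greedyT n q j) (x b) := by
    intro i j hi hij hj a ha b hb
    have hBA : ∀ u ∈ greedyT n q i, ∀ v ∈ greedyT n q j, x v ≤ x u := fun u hu v hv =>
      hmono v u (mem_Icc.1 (greedyT_subset_Icc hv)).1 (lt_of_mem_greedyT hij hu hv).le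
        (mem_Icc.1 (greedyT_subset_Icc hu)).2
    exact phi_swap_eq_of_le x ha hb (fun h => (lt_of_mem_greedyT hij ha h).false)
      (fun h => (lt_of_mem_greedyT hij h hb).false)
      (card_greedyT_le hi hij.le (hq i j hi hij.le hj)) hBA
  refine ⟨weak, ?_⟩
  rintro ⟨i, j, a, b, hi, hik, hj, hjk, hne, ha, hb, henvy, hreplace⟩
  rcases hne.lt_or_gt with hij | hji
  · exact henvy.ne (weak i j hi hij hjk a ha b hb henvy.le).1
  · exact henvy.ne (weak j i hj hji hik b hb a ha hreplace).2

/-- in the backward greedy allocation, if `a ∈ T_i`, `b ∈ T_j` with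
`i < j` and `a` could (weakly) profitably replace `b`, then swapping `a` and `b`
changes neither agent's cost; in particular the allocation is strongly swap-stable. -/
theorem stmt14 (n k : ℕ) (x : ℕ → ℝ)
    (hpos : ∀ a ∈ Finset.Icc 1 n, 0 < x a)
    (hmono : ∀ a b, 1 ≤ a → a ≤ b → b ≤ n → x a ≤ x b)
    (q : ℕ → ℕ) (hq : ∀ i j, 1 ≤ i → i ≤ j → j ≤ k → q j ≤ q i)
    (hfeas : n ≤ cumQ q k) :
    (∀ i j, 1 ≤ i → i < j → j ≤ k →
      ∀ a ∈ greedyT n q i, ∀ b ∈ greedyT n q j,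
        phi x ((greedyT n q j).erase b ∪ {a}) (x a)
            ≤ phi x (greedyT n q i) (x a) →
          phi x ((greedyT n q j).erase b ∪ {a}) (x a)
              = phi x (greedyT n q i) (x a) ∧
          phi x ((greedyT n q i).erase a ∪ {b}) (x b)
              = phi x (greedyT n q j) (x b)) ∧
    ¬ ∃ i j a b, 1 ≤ i ∧ i ≤ k ∧ 1 ≤ j ∧ j ≤ k ∧ i ≠ j ∧
        a ∈ greedyT n q i ∧ b ∈ greedyT n q j ∧
        phi x ((greedyT n q j).erase b ∪ {a}) (x a)
            < phi x (greedyT n q i) (x a) ∧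
        phi x ((greedyT n q i).erase a ∪ {b}) (x b)
            ≤ phi x (greedyT n q j) (x b) :=
  stmt14_general n k x hmono q hq
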